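/- arXiv:2205.05059 — 3 statements merged into one kernel-verified Lean document; each statement's English description precedes it below -/
import Mathlib

section
/- Let T be a nondegenerate tetrahedron in ℝ³ with diameter h_T and insphere diameter ρ_T. Then for every edge e of T, the dihedral angle α_e of T at e satisfies sin(α_e) ≥ ρ_T / h_T. -/
open scoped RealInnerProductSpace

/-- The dihedral angle of a tetrahedron at the edge `[a, b]`, where `p` and `q` are the two
remaining vertices: it is the angle between the components of `p - a` and `q - a` orthogonal
to the edge direction `b - a`. -/
noncomputable def dihedralAngle (a b p q : EuclideanSpace ℝ (Fin 3)) : ℝ :=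
  InnerProductGeometry.angle
    ((p - a) - (⟪p - a, b - a⟫ / ⟪b - a, b - a⟫) • (b - a))
    ((q - a) - (⟪q - a, b - a⟫ / ⟪b - a, b - a⟫) • (b - a))

/-! Let `m` be the perpendicular from the plane of the face `abp` to the opposite vertex `q`.
Splitting off the edge direction `b - a` first, `‖m‖ = sin α · ‖w‖`, where `w` is the component
of `q - a` orthogonal to the edge, and `‖w‖ ≤ dist q a ≤ h_T`. On the other hand the tetrahedron
lies in the slab between the plane `abp` and its parallel through `q`, which has width `‖m‖`, so
every ball inside it has diameter at most `‖m‖`. -/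

open InnerProductGeometry Metric Set

section

variable {E : Type*} [NormedAddCommGroup E] [InnerProductSpace ℝ E]

-- For `u = 0` this is `x`, since `⟪u, u⟫⁻¹ = 0`.
noncomputable def orthComponent (u x : E) : E := x - (⟪x, u⟫ / ⟪u, u⟫) • u

theorem orthComponent_zero_left (x : E) : orthComponent 0 x = x := by
  simp [orthComponent]

theorem inner_orthComponent_self (u x : E) : ⟪orthComponent u x, u⟫ = 0 := by
  rcases eq_or_ne u 0 with rfl | hu
  · exact inner_zero_right _
  have huu : ⟪u, u⟫ ≠ 0 := inner_self_ne_zero.mpr hu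
  rw [orthComponent, inner_sub_left, real_inner_smul_left, div_mul_cancel₀ _ huu, sub_self]

theorem inner_orthComponent_of_inner_eq_zero {u w : E} (h : ⟪u, w⟫ = 0) (x : E) :
    ⟪orthComponent u x, w⟫ = ⟪x, w⟫ := by
  rw [orthComponent, inner_sub_left, real_inner_smul_left, h, mul_zero, sub_zero]

theorem norm_orthComponent_eq_sin_angle_mul (u x : E) :
    ‖orthComponent u x‖ = Real.sin (angle u x) * ‖x‖ := by
  rcases eq_or_ne u 0 with rfl | hu
  · rw [orthComponent_zero_left, angle_zero_left, Real.sin_pi_div_two, one_mul]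
  set y := orthComponent u x
  have hgram : ⟪u, u⟫ * ⟪x, x⟫ - ⟪u, x⟫ * ⟪u, x⟫ = (‖u‖ * ‖y‖) ^ 2 := by
    have huu : ⟪u, u⟫ ≠ 0 := inner_self_ne_zero.mpr hu
    rw [mul_pow, ← real_inner_self_eq_norm_sq, ← real_inner_self_eq_norm_sq]
    simp only [y, orthComponent, inner_sub_left, inner_sub_right, real_inner_smul_left,
      real_inner_smul_right, real_inner_comm u x]
    field_simp
    ring
  refine mul_left_cancel₀ (norm_ne_zero_iff.mpr hu) ?_
  calc ‖u‖ * ‖y‖ = √((‖u‖ * ‖y‖) ^ 2) := (Real.sqrt_sq (by positivity)).symm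
    _ = Real.sin (angle u x) * (‖u‖ * ‖x‖) := by rw [← hgram, sin_angle_mul_norm_mul_norm]
    _ = ‖u‖ * (Real.sin (angle u x) * ‖x‖) := by ring

theorem norm_orthComponent_le (u x : E) : ‖orthComponent u x‖ ≤ ‖x‖ := by
  rw [norm_orthComponent_eq_sin_angle_mul]
  exact mul_le_of_le_one_left (norm_nonneg x) (Real.sin_le_one _)

theorem two_mul_mul_norm_le_of_closedBall_subset {z n : E} {r c d : ℝ} (hr : 0 ≤ r)
    (h : closedBall z r ⊆ {x | ⟪n, x⟫ ∈ Icc c d}) : 2 * r * ‖n‖ ≤ d - c := by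
  set y := (r / ‖n‖) • n
  have hy : ‖y‖ ≤ r := by
    rcases eq_or_ne n 0 with rfl | hn
    · simpa [y] using hr
    rw [norm_smul, Real.norm_of_nonneg (by positivity),
      div_mul_cancel₀ _ (norm_ne_zero_iff.mpr hn)]
  have hny : ⟪n, y⟫ = r * ‖n‖ := by
    rw [real_inner_smul_right, real_inner_self_eq_norm_sq]
    rcases eq_or_ne ‖n‖ 0 with hn | hn
    · simp [hn]
    · field_simp
  have hplus := (h (by simpa [dist_eq_norm] using hy : z + y ∈ closedBall z r)).2
  have hminus := (h (by simpa [dist_eq_norm] using hy : z - y ∈ closedBall z r)).1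
  rw [inner_add_right] at hplus
  rw [inner_sub_right] at hminus
  linarith

theorem orthComponent_mem_iff {V : Submodule ℝ E} {u : E} (hu : u ∈ V) (x : E) :
    orthComponent u x ∈ V ↔ x ∈ V :=
  V.sub_mem_iff_left (V.smul_mem _ hu)

-- Gram–Schmidt on `b - a, p - a, q - a`: the perpendicular from the plane `abp` to `q`.
noncomputable def altitude (a b p q : E) : E :=
  orthComponent (orthComponent (b - a) (p - a)) (orthComponent (b - a) (q - a))

variable (a b p q : E)

theorem inner_altitude_edge : ⟪altitude a b p q, b - a⟫ = 0 := by
  rw [altitude, inner_orthComponent_of_inner_eq_zero (inner_orthComponent_self _ _),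
    inner_orthComponent_self]

theorem inner_altitude_face : ⟪altitude a b p q, p - a⟫ = 0 := by
  rw [real_inner_comm, ← inner_orthComponent_of_inner_eq_zero
    ((real_inner_comm _ _).trans (inner_altitude_edge a b p q)), real_inner_comm]
  exact inner_orthComponent_self _ _

theorem inner_altitude_apex : ⟪altitude a b p q, q - a⟫ = ‖altitude a b p q‖ ^ 2 := by
  rw [real_inner_comm, ← inner_orthComponent_of_inner_eq_zero
    ((real_inner_comm _ _).trans (inner_altitude_edge a b p q)), ← real_inner_self_eq_norm_sq]
  exact (inner_orthComponent_of_inner_eq_zero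
    ((real_inner_comm _ _).trans (inner_orthComponent_self _ _)) _).symm

theorem norm_altitude_le :
    ‖altitude a b p q‖ ≤
      Real.sin (angle (orthComponent (b - a) (p - a)) (orthComponent (b - a) (q - a))) *
        dist q a := by
  rw [altitude, norm_orthComponent_eq_sin_angle_mul, dist_eq_norm]
  exact mul_le_mul_of_nonneg_left (norm_orthComponent_le _ _) (sin_angle_nonneg _ _)

variable {a b p q}

theorem altitude_ne_zero (hq : q ∉ affineSpan ℝ {a, b, p}) : altitude a b p q ≠ 0 := by
  intro h
  let V := (affineSpan ℝ ({a, b, p} : Set E)).direction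
  have hb : b - a ∈ V := AffineSubspace.vsub_mem_direction (mem_affineSpan ℝ (by simp))
    (mem_affineSpan ℝ (by simp))
  have hp : p - a ∈ V := AffineSubspace.vsub_mem_direction (mem_affineSpan ℝ (by simp))
    (mem_affineSpan ℝ (by simp))
  have hw : orthComponent (b - a) (p - a) ∈ V := (orthComponent_mem_iff hb _).2 hp
  have hm : altitude a b p q ∈ V := h ▸ V.zero_mem
  have hqa : q - a ∈ V := (orthComponent_mem_iff hb _).1 ((orthComponent_mem_iff hw _).1 hm)
  exact hq ((AffineSubspace.vsub_right_mem_direction_iff_mem (mem_affineSpan ℝ (by simp)) q).1 hqa)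

theorem two_mul_le_norm_altitude {z : E} {r : ℝ} (hq : q ∉ affineSpan ℝ {a, b, p})
    (hball : closedBall z r ⊆ convexHull ℝ {a, b, p, q}) : 2 * r ≤ ‖altitude a b p q‖ := by
  rcases lt_or_ge r 0 with hr | hr
  · linarith [norm_nonneg (altitude a b p q)]
  set m := altitude a b p q
  have hm : 0 < ‖m‖ := norm_pos_iff.mpr (altitude_ne_zero hq)
  have hslab : convexHull ℝ {a, b, p, q} ⊆ {x | ⟪m, x⟫ ∈ Icc ⟪m, a⟫ (⟪m, a⟫ + ‖m‖ ^ 2)} := by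
    refine convexHull_min ?_ ((convex_Icc _ _).linear_preimage (innerₛₗ ℝ m))
    have hb := inner_altitude_edge a b p q
    have hp := inner_altitude_face a b p q
    have hq := inner_altitude_apex a b p q
    rw [inner_sub_right, sub_eq_zero] at hb hp
    rw [inner_sub_right, sub_eq_iff_eq_add'] at hq
    simp [insert_subset_iff, m, hb, hp, hq]
  have hwidth := two_mul_mul_norm_le_of_closedBall_subset hr (hball.trans hslab)
  rw [add_sub_cancel_left, sq] at hwidth
  exact le_of_mul_le_mul_right hwidth hm

end

theorem fin_four_ne_of_insert_eq_univ {i j k l : Fin 4}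
    (h : ({i, j, k, l} : Finset (Fin 4)) = Finset.univ) : l ≠ i ∧ l ≠ j ∧ l ≠ k := by
  revert i j k l
  decide

theorem sin_dihedral_angle_ge_general
    (v : Fin 4 → EuclideanSpace ℝ (Fin 3))
    (hv : AffineIndependent ℝ v)
    (T : Set (EuclideanSpace ℝ (Fin 3)))
    (hT : T = convexHull ℝ (Set.range v))
    (z : EuclideanSpace ℝ (Fin 3)) (r : ℝ)
    (hball : Metric.closedBall z r ⊆ T)
    (i j k l : Fin 4) (hijkl : ({i, j, k, l} : Finset (Fin 4)) = Finset.univ) :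
    2 * r / Metric.diam T ≤ Real.sin (dihedralAngle (v i) (v j) (v k) (v l)) := by
  obtain ⟨hli, hlj, hlk⟩ := fin_four_ne_of_insert_eq_univ hijkl
  have hl : v l ∉ affineSpan ℝ {v i, v j, v k} := by
    simpa [image_insert_eq, hli, hlj, hlk] using hv.mem_affineSpan_iff l {i, j, k}
  have hT' : T = convexHull ℝ {v i, v j, v k, v l} := by
    rw [hT, ← image_univ, ← Finset.coe_univ, ← hijkl]
    simp [image_insert_eq]
  have hdist : dist (v l) (v i) ≤ diam T :=
    dist_le_diam_of_mem (hT ▸ isBounded_convexHull.2 (finite_range v).isBounded)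
      (hT' ▸ subset_convexHull ℝ _ (by simp)) (hT' ▸ subset_convexHull ℝ _ (by simp))
  refine div_le_of_le_mul₀ diam_nonneg (sin_angle_nonneg _ _) ?_
  calc 2 * r ≤ ‖altitude (v i) (v j) (v k) (v l)‖ := two_mul_le_norm_altitude hl (hT' ▸ hball)
    _ ≤ Real.sin (dihedralAngle (v i) (v j) (v k) (v l)) * dist (v l) (v i) :=
      norm_altitude_le _ _ _ _
    _ ≤ Real.sin (dihedralAngle (v i) (v j) (v k) (v l)) * diam T :=
      mul_le_mul_of_nonneg_left hdist (sin_angle_nonneg _ _)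

/-- Let `T` be a nondegenerate tetrahedron in `ℝ³` with diameter `h_T` and
insphere diameter `ρ_T = 2 * r`.  Then for every edge `e = [v i, v j]` of `T` (shared by the
two faces through the remaining vertices `v k`, `v l`), the dihedral angle `α_e` of `T` at `e`
satisfies `sin α_e ≥ ρ_T / h_T`. -/
theorem sin_dihedral_angle_ge
    (v : Fin 4 → EuclideanSpace ℝ (Fin 3))
    (hv : AffineIndependent ℝ v)
    (T : Set (EuclideanSpace ℝ (Fin 3)))
    (hT : T = convexHull ℝ (Set.range v))
    (z : EuclideanSpace ℝ (Fin 3)) (r : ℝ)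
    (hball : Metric.closedBall z r ⊆ T)
    (hmax : ∀ (z' : EuclideanSpace ℝ (Fin 3)) (r' : ℝ),
      Metric.closedBall z' r' ⊆ T → r' ≤ r)
    (i j k l : Fin 4) (hijkl : ({i, j, k, l} : Finset (Fin 4)) = Finset.univ) :
    2 * r / Metric.diam T ≤ Real.sin (dihedralAngle (v i) (v j) (v k) (v l)) :=
  sin_dihedral_angle_ge_general v hv T hT z r hball i j k l hijkl
end

section
/- Let T₁ = [x₁,x₂,x₃,x₄] and T₂ = [x₁,x₃,x₄,x₅] be two nondegenerate tetrahedra in ℝ³ sharing the common face F₀ = [x₁,x₃,x₄] and lying on opposite sides of the plane of F₀. Let z_i be the incenter of T_i and z_{i,0} the orthogonal projection of z_i onto the plane containing F₀, for i = 1,2. Then z_{1,0} and z_{2,0} lie in the relative interior of F₀, the segment [z₁, z₂] intersects F₀ in a single point m₀ which lies on the segment [z_{1,0}, z_{2,0}], and dist(m₀, ∂F₀) ≥ min( dist(z_{1,0}, ∂F₀), dist(z_{2,0}, ∂F₀) ). -/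
/-!
Write `dᵢ` for the signed distance to the plane of the `i`-th face of a tetrahedron and `hᵢ` for
the corresponding height. A ball `B(z, r)` lies in the tetrahedron iff `r ≤ dᵢ(z)` for all `i`,
and `∑ dᵢ / hᵢ = 1` everywhere. For a largest ball, comparison with the insphere gives
`r ≥ inradius`, so `1 = ∑ dᵢ(z) / hᵢ ≥ ∑ inradius / hᵢ = 1` forces `dᵢ(z) = inradius` for all
`i`: the centre is the incenter, and its foot on a face is the touchpoint of the insphere, which
lies in the relative interior of the face. Each incenter lies on the same side of the common
plane as the opposite vertex, so `z₁` and `z₂` are strictly separated by it and `[z₁, z₂]`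
crosses it at a single point `m₀`; the orthogonal projection onto the plane is affine and fixes
`m₀`, so `m₀ ∈ [z₁₀, z₂₀]`. Finally, in a convex set the distance to the relative boundary at a
point of a segment is at least its smaller value at the two endpoints, since the relative balls
around the endpoints translate to relative balls around every point between them.
-/

open scoped RealInnerProductSpace

lemma mem_intrinsicInterior_of_isOpen {𝕜 V P : Type*} [Ring 𝕜] [AddCommGroup V] [Module 𝕜 V]
    [TopologicalSpace P] [AddTorsor V P] {C U : Set P} {x : P} (hU : IsOpen U) (hxU : x ∈ U)
    (hx : x ∈ affineSpan 𝕜 C) (hUC : U ∩ affineSpan 𝕜 C ⊆ C) : x ∈ intrinsicInterior 𝕜 C :=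
  mem_intrinsicInterior.2 ⟨⟨x, hx⟩,
    interior_maximal (fun (y : affineSpan 𝕜 C) hy => hUC ⟨hy, y.2⟩)
      (hU.preimage continuous_subtype_val) hxU, rfl⟩

lemma mem_of_dist_lt_infDist_intrinsicFrontier {V P : Type*} [NormedAddCommGroup V]
    [NormedSpace ℝ V] [MetricSpace P] [NormedAddTorsor V P] {C : Set P} {x y : P} (hx : x ∈ C)
    (hy : y ∈ affineSpan ℝ C) (h : dist x y < Metric.infDist x (intrinsicFrontier ℝ C)) :
    y ∈ C := by
  set C' : Set (affineSpan ℝ C) := (↑) ⁻¹' C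
  let γ : ℝ → affineSpan ℝ C := fun t =>
    ⟨AffineMap.lineMap x y t, AffineMap.lineMap_mem t (subset_affineSpan ℝ C hx) hy⟩
  have hγ : Continuous γ := AffineMap.lineMap_continuous.subtype_mk _
  have hfr : ∀ t ∈ Set.Icc (0 : ℝ) 1, γ t ∉ frontier C' := by
    rintro t ⟨ht0, ht1⟩ hfr
    have := Metric.infDist_le_dist_of_mem (x := x) (mem_intrinsicFrontier.2 ⟨γ t, hfr, rfl⟩)
    rw [dist_left_lineMap, Real.norm_of_nonneg ht0] at this
    nlinarith [dist_nonneg (x := x) (y := y)]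
  -- By connectedness, a path from `x` that avoids the relative frontier stays in the relative
  -- interior.
  have hsub : γ '' Set.Icc 0 1 ⊆ interior C' ∪ (closure C')ᶜ := by
    rintro _ ⟨t, ht, rfl⟩
    by_cases hc : γ t ∈ closure C'
    · exact Or.inl (closure_sdiff_frontier C' ▸ ⟨hc, hfr t ht⟩)
    · exact Or.inr hc
  rcases (isPreconnected_Icc.image γ hγ.continuousOn).subset_or_subset isOpen_interior
    isClosed_closure.isOpen_compl (disjoint_compl_right.mono_left interior_subset_closure) hsub
    with hint | hext
  · simpa [γ, C'] using interior_subset (hint ⟨1, ⟨zero_le_one, le_rfl⟩, rfl⟩)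
  · exact absurd (subset_closure (by simpa [γ, C'] using hx)) (hext ⟨0, ⟨le_rfl, zero_le_one⟩, rfl⟩)

lemma Convex.min_infDist_intrinsicFrontier_le {V : Type*} [NormedAddCommGroup V]
    [NormedSpace ℝ V] {C : Set V} (hC : Convex ℝ C) {x y z : V} (hx : x ∈ C) (hy : y ∈ C)
    (hz : z ∈ segment ℝ x y) :
    min (Metric.infDist x (intrinsicFrontier ℝ C)) (Metric.infDist y (intrinsicFrontier ℝ C)) ≤
      Metric.infDist z (intrinsicFrontier ℝ C) := by
  rcases (intrinsicFrontier ℝ C).eq_empty_or_nonempty with hempty | hne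
  · simp [hempty]
  set d := min (Metric.infDist x (intrinsicFrontier ℝ C)) (Metric.infDist y (intrinsicFrontier ℝ C))
  have hball : ∀ q ∈ affineSpan ℝ C, dist z q < d → q ∈ C := by
    intro q hq hzq
    have hv : q - z ∈ (affineSpan ℝ C).direction :=
      AffineSubspace.vsub_mem_direction hq (subset_affineSpan ℝ C (hC.segment_subset hx hy hz))
    have hshift : ∀ p ∈ C, d ≤ Metric.infDist p (intrinsicFrontier ℝ C) → q - z + p ∈ C :=
      fun p hp hd => mem_of_dist_lt_infDist_intrinsicFrontier hp
        (AffineSubspace.vadd_mem_of_mem_direction hv (subset_affineSpan ℝ C hp))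
        (by rw [dist_comm, dist_add_self_left, ← dist_eq_norm, dist_comm]; exact hzq.trans_le hd)
    simpa using hC.segment_subset (hshift x hx (min_le_left _ _)) (hshift y hy (min_le_right _ _))
      ((mem_segment_translate ℝ (q - z)).2 hz)
  refine (Metric.le_infDist hne).2 fun w hw => le_of_not_gt fun hzw => ?_
  have hwA : w ∈ affineSpan ℝ C :=
    intrinsicClosure_subset_affineSpan (intrinsicFrontier_subset_intrinsicClosure hw)
  have hwint : w ∈ intrinsicInterior ℝ C :=
    mem_intrinsicInterior_of_isOpen Metric.isOpen_ball (Metric.mem_ball_self (sub_pos.2 hzw)) hwA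
      fun q ⟨hqw, hq⟩ => hball q hq (by
        linarith [dist_triangle z w q, dist_comm q w ▸ Metric.mem_ball.1 hqw])
  rw [← intrinsicClosure_sdiff_intrinsicInterior] at hw
  exact hw.2 hwint

lemma AffineSubspace.subsingleton_segment_inter_of_notMem {k V : Type*} [Field k] [LinearOrder k]
    [IsStrictOrderedRing k] [AddCommGroup V] [Module k V] {S : AffineSubspace k V} {x : V}
    (hx : x ∉ S) (y : V) : (segment k x y ∩ S).Subsingleton := by
  rw [segment_eq_image_lineMap]
  rintro _ ⟨⟨a, -, rfl⟩, ha⟩ _ ⟨⟨b, -, rfl⟩, hb⟩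
  by_contra hne
  have hab : b - a ≠ 0 := sub_ne_zero.2 fun h => hne (h ▸ rfl)
  have hdir : (b - a) • (y - x) ∈ S.direction := by
    convert AffineSubspace.vsub_mem_direction hb ha using 1
    simp only [AffineMap.lineMap_apply_module, vsub_eq_sub]
    module
  rw [S.direction.smul_mem_iff hab] at hdir
  refine hx ?_
  convert AffineSubspace.vadd_mem_of_mem_direction (S.direction.smul_mem (-a) hdir) ha using 1
  simp only [AffineMap.lineMap_apply_module, vadd_eq_add]
  module

namespace EuclideanGeometry

variable {V P : Type*} [NormedAddCommGroup V] [InnerProductSpace ℝ V] [MetricSpace P]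
  [NormedAddTorsor V P] {S : AffineSubspace ℝ P} [Nonempty S] [S.direction.HasOrthogonalProjection]

lemma coe_orthogonalProjection_eq_of_forall_inner_eq_zero {x q : P} (hq : q ∈ S)
    (h : ∀ p ∈ S, ⟪x -ᵥ q, p -ᵥ q⟫ = 0) : (orthogonalProjection S x : P) = q := by
  refine coe_orthogonalProjection_eq_iff_mem.2
    ⟨hq, (Submodule.mem_orthogonal' _ _).2 fun u hu => ?_⟩
  simpa using h _ (AffineSubspace.vadd_mem_of_mem_direction hu hq)

lemma _root_.Wbtw.orthogonalProjection {x p y : P} (h : Wbtw ℝ x p y) (hp : p ∈ S) :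
    Wbtw ℝ (EuclideanGeometry.orthogonalProjection S x : P) p
      (EuclideanGeometry.orthogonalProjection S y) := by
  simpa [orthogonalProjection_eq_self_iff.2 hp] using
    h.map (S.subtype.comp (EuclideanGeometry.orthogonalProjection S).toAffineMap)

end EuclideanGeometry

lemma AffineSubspace.SOppSide.exists_segment_inter_eq_singleton {V : Type*}
    [NormedAddCommGroup V] [InnerProductSpace ℝ V] {S : AffineSubspace ℝ V} [Nonempty S]
    [S.direction.HasOrthogonalProjection] {x y : V} (h : S.SOppSide x y) {F : Set V}
    (hF : Convex ℝ F) (hFS : F ⊆ S) (hx : ↑(EuclideanGeometry.orthogonalProjection S x) ∈ F)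
    (hy : ↑(EuclideanGeometry.orthogonalProjection S y) ∈ F) :
    ∃ m, segment ℝ x y ∩ F = {m} ∧
      m ∈ segment ℝ (EuclideanGeometry.orthogonalProjection S x : V)
        (EuclideanGeometry.orthogonalProjection S y) := by
  obtain ⟨m, hm, hxmy⟩ := h.exists_sbtw
  have hm' := mem_segment_iff_wbtw.2 (hxmy.wbtw.orthogonalProjection hm)
  refine ⟨m, ?_, hm'⟩
  exact ((AffineSubspace.subsingleton_segment_inter_of_notMem h.left_notMem y).anti
    (Set.inter_subset_inter_right _ hFS)).eq_singleton_of_mem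
      ⟨mem_segment_iff_wbtw.2 hxmy.wbtw, hF.segment_subset hx hy hm'⟩

namespace Affine.Simplex

variable {V P : Type*} [NormedAddCommGroup V] [InnerProductSpace ℝ V] [MetricSpace P]
  [NormedAddTorsor V P] {n : ℕ} [NeZero n] (s : Simplex ℝ P n)

lemma signedInfDist_affineCombination_eq_mul_height {w : Fin (n + 1) → ℝ} (hw : ∑ i, w i = 1)
    (i : Fin (n + 1)) :
    s.signedInfDist i (Finset.univ.affineCombination ℝ s.points w) = w i * s.height i := by
  rw [signedInfDist_affineCombination _ _ hw, ← altitudeFoot, height, dist_eq_norm_vsub]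

lemma signedInfDist_vadd (i : Fin (n + 1)) (v : V) (p : P) :
    s.signedInfDist i (v +ᵥ p) =
      ⟪NormedSpace.normalize (s.points i -ᵥ s.altitudeFoot i), v⟫ + s.signedInfDist i p := by
  rw [signedInfDist, AffineSubspace.signedInfDist_def, signedDist_vadd_right]
  congr 4
  simp [altitudeFoot, orthogonalProjectionSpan]

lemma norm_normalize_vsub_altitudeFoot (i : Fin (n + 1)) :
    ‖NormedSpace.normalize (s.points i -ᵥ s.altitudeFoot i)‖ = 1 :=
  NormedSpace.norm_normalize_eq_one_iff.2 (vsub_ne_zero.2 (s.ne_altitudeFoot i))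

variable {s} in
lemma mem_closedInterior_iff_forall_signedInfDist_nonneg {p : P}
    (hp : p ∈ affineSpan ℝ (Set.range s.points)) :
    p ∈ s.closedInterior ↔ ∀ i, 0 ≤ s.signedInfDist i p := by
  obtain ⟨w, hw, rfl⟩ := eq_affineCombination_of_mem_affineSpan_of_fintype hp
  simp_rw [affineCombination_mem_closedInterior_iff hw,
    signedInfDist_affineCombination_eq_mul_height _ hw,
    mul_nonneg_iff_of_pos_right (s.height_pos _), Set.mem_Icc]
  refine ⟨fun h i => (h i).1, fun h i => ⟨h i, ?_⟩⟩
  rw [← hw]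
  exact Finset.single_le_sum (fun j _ => h j) (Finset.mem_univ i)

variable {s} in
lemma sum_signedInfDist_div_height {p : P} (hp : p ∈ affineSpan ℝ (Set.range s.points)) :
    ∑ i, s.signedInfDist i p / s.height i = 1 := by
  obtain ⟨w, hw, rfl⟩ := eq_affineCombination_of_mem_affineSpan_of_fintype hp
  simp_rw [signedInfDist_affineCombination_eq_mul_height _ hw,
    mul_div_cancel_right₀ _ (s.height_pos _).ne']
  exact hw

variable {s} in
lemma closedBall_subset_closedInterior_iff (hs : affineSpan ℝ (Set.range s.points) = ⊤) {z : P}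
    {r : ℝ} (hr : 0 ≤ r) :
    Metric.closedBall z r ⊆ s.closedInterior ↔ ∀ i, r ≤ s.signedInfDist i z := by
  have hmem : ∀ p, p ∈ s.closedInterior ↔ ∀ i, 0 ≤ s.signedInfDist i p := fun p =>
    mem_closedInterior_iff_forall_signedInfDist_nonneg (hs ▸ AffineSubspace.mem_top ℝ V p)
  simp_rw [Set.subset_def, hmem]
  refine ⟨fun h i => ?_, fun h p hp i => ?_⟩
  · set u := NormedSpace.normalize (s.points i -ᵥ s.altitudeFoot i)
    have hball : (-r) • u +ᵥ z ∈ Metric.closedBall z r := by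
      rw [Metric.mem_closedBall, dist_vadd_left, norm_smul, s.norm_normalize_vsub_altitudeFoot,
        norm_neg, Real.norm_of_nonneg hr, mul_one]
    have := h _ hball i
    rw [signedInfDist_vadd, inner_smul_right, real_inner_self_eq_norm_sq,
      s.norm_normalize_vsub_altitudeFoot] at this
    linarith
  · have hle :=
      real_inner_le_norm (-NormedSpace.normalize (s.points i -ᵥ s.altitudeFoot i)) (p -ᵥ z)
    rw [inner_neg_left, norm_neg, s.norm_normalize_vsub_altitudeFoot, one_mul,
      ← dist_eq_norm_vsub] at hle
    rw [← vsub_vadd p z, signedInfDist_vadd]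
    linarith [h i, Metric.mem_closedBall.1 hp]

variable {s} in
lemma eq_incenter_of_closedBall_subset_closedInterior
    (hs : affineSpan ℝ (Set.range s.points) = ⊤) {z : P} {r : ℝ}
    (hball : Metric.closedBall z r ⊆ s.closedInterior)
    (hmax : ∀ z' r', Metric.closedBall z' r' ⊆ s.closedInterior → r' ≤ r) :
    z = s.incenter := by
  have hmem : ∀ p, p ∈ affineSpan ℝ (Set.range s.points) := fun p =>
    hs ▸ AffineSubspace.mem_top ℝ V p
  have hinr : s.inradius ≤ r := hmax _ _ <|
    (closedBall_subset_closedInterior_iff hs s.inradius_pos.le).2 fun i =>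
      (s.signedInfDist_incenter i).ge
  have hr := (closedBall_subset_closedInterior_iff hs (s.inradius_pos.le.trans hinr)).1 hball
  have hsum : ∑ i, (s.signedInfDist i z - s.inradius) / s.height i = 0 := by
    have hinc := sum_signedInfDist_div_height (hmem s.incenter)
    simp only [signedInfDist_incenter] at hinc
    rw [← sub_self (1 : ℝ)]
    nth_rw 1 [← sum_signedInfDist_div_height (hmem z), ← hinc]
    simp only [sub_div, Finset.sum_sub_distrib]
  have hzero := (Finset.sum_eq_zero_iff_of_nonneg fun i _ =>
    div_nonneg (sub_nonneg.2 (hinr.trans (hr i))) (s.height_pos i).le).1 hsum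
  refine (exists_forall_signedInfDist_eq_iff_eq_incenter s (hmem z)).1 ⟨s.inradius, fun i => ?_⟩
  have := hzero i (Finset.mem_univ i)
  rw [div_eq_zero_iff, sub_eq_zero] at this
  exact this.resolve_right (s.height_pos i).ne'

lemma interior_subset_intrinsicInterior : s.interior ⊆ intrinsicInterior ℝ s.closedInterior := by
  intro q hq
  obtain ⟨w, hw, rfl⟩ := eq_affineCombination_of_mem_affineSpan_of_fintype
    (s.interior_subset_closedInterior.trans closedInterior_subset_affineSpan hq)
  have hw01 := (affineCombination_mem_interior_iff hw).1 hq
  have hspan : affineSpan ℝ s.closedInterior = affineSpan ℝ (Set.range s.points) := by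
    refine le_antisymm (affineSpan_le.2 closedInterior_subset_affineSpan) (affineSpan_mono ℝ ?_)
    exact Set.range_subset_iff.2 s.point_mem_closedInterior
  refine mem_intrinsicInterior_of_isOpen (U := ⋂ i, {p | 0 < s.signedInfDist i p})
    (isOpen_iInter_of_finite fun i => isOpen_lt continuous_const (s.signedInfDist i).continuous)
    (Set.mem_iInter.2 fun i => ?_) (subset_affineSpan ℝ _ (s.interior_subset_closedInterior hq)) ?_
  · rw [Set.mem_ofPred_eq, signedInfDist_affineCombination_eq_mul_height _ hw]
    exact mul_pos (hw01 i).1 (s.height_pos i)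
  · rintro p ⟨hpos, hp⟩
    rw [SetLike.mem_coe, hspan] at hp
    exact (mem_closedInterior_iff_forall_signedInfDist_nonneg hp).2 fun i =>
      (Set.mem_iInter.1 hpos i).le

lemma mem_intrinsicInterior_faceOpposite_of_forall_inner_incenter [Nat.AtLeastTwo n]
    (i : Fin (n + 1)) {q : P} (hq : q ∈ affineSpan ℝ (Set.range (s.faceOpposite i).points))
    (h : ∀ p ∈ affineSpan ℝ (Set.range (s.faceOpposite i).points),
      ⟪s.incenter -ᵥ q, p -ᵥ q⟫ = 0) :
    q ∈ intrinsicInterior ℝ (s.faceOpposite i).closedInterior := by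
  have := Nat.AtLeastTwo.neZero_sub_one (n := n)
  rw [← EuclideanGeometry.coe_orthogonalProjection_eq_of_forall_inner_eq_zero hq h]
  simpa [touchpoint, orthogonalProjectionSpan] using
    (s.faceOpposite i).interior_subset_intrinsicInterior
      (s.touchpoint_empty_mem_interior_faceOpposite i)

end Affine.Simplex

lemma Affine.Simplex.sSameSide_and_mem_intrinsicInterior_of_closedBall_subset_closedInterior
    {V : Type*} [NormedAddCommGroup V] [InnerProductSpace ℝ V] {n : ℕ} [Nat.AtLeastTwo n]
    {s : Simplex ℝ V n}
    (hs : affineSpan ℝ (Set.range s.points) = ⊤) {z : V} {r : ℝ}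
    (hball : Metric.closedBall z r ⊆ s.closedInterior)
    (hmax : ∀ z' r', Metric.closedBall z' r' ⊆ s.closedInterior → r' ≤ r) {i : Fin (n + 1)}
    {F : Set V} (hF : Set.range (s.faceOpposite i).points = F) {q : V}
    (hq : q ∈ affineSpan ℝ F) (hperp : ∀ p ∈ affineSpan ℝ F, ⟪z - q, p - q⟫ = 0) :
    (affineSpan ℝ F).SSameSide z (s.points i) ∧ q ∈ intrinsicInterior ℝ (convexHull ℝ F) := by
  subst hF
  rw [eq_incenter_of_closedBall_subset_closedInterior hs hball hmax] at hperp ⊢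
  exact ⟨s.sSameSide_incenter_point i, (s.faceOpposite i).convexHull_eq_closedInterior ▸
    s.mem_intrinsicInterior_faceOpposite_of_forall_inner_incenter i hq hperp⟩

/-- Let `T₁ = [x₁,x₂,x₃,x₄]` and `T₂ = [x₁,x₃,x₄,x₅]` be two nondegenerate
tetrahedra in `ℝ³` sharing the common face `F₀ = [x₁,x₃,x₄]` and lying on opposite sides of
the plane of `F₀`.  Let `z_i` be the incenter of `T_i` (center of the largest closed ball
contained in `T_i`) and `z_{i,0}` the orthogonal projection of `z_i` onto the plane containing
`F₀`, for `i = 1,2`.  Then `z_{1,0}` and `z_{2,0}` lie in the relative interior of `F₀`, the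
segment `[z₁, z₂]` intersects `F₀` in a single point `m₀` which lies on the segment
`[z_{1,0}, z_{2,0}]`, and `dist(m₀, ∂F₀) ≥ min(dist(z_{1,0}, ∂F₀), dist(z_{2,0}, ∂F₀))`. -/
theorem split_point_dist_boundary_ge_min
    (x₁ x₂ x₃ x₄ x₅ : EuclideanSpace ℝ (Fin 3))
    (h₁ : AffineIndependent ℝ ![x₁, x₂, x₃, x₄])
    (h₂ : AffineIndependent ℝ ![x₁, x₃, x₄, x₅])
    (T₁ T₂ F₀ : Set (EuclideanSpace ℝ (Fin 3)))
    (hT₁ : T₁ = convexHull ℝ {x₁, x₂, x₃, x₄})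
    (hT₂ : T₂ = convexHull ℝ {x₁, x₃, x₄, x₅})
    (hF₀ : F₀ = convexHull ℝ {x₁, x₃, x₄})
    (hopp : (affineSpan ℝ ({x₁, x₃, x₄} : Set (EuclideanSpace ℝ (Fin 3)))).SOppSide x₂ x₅)
    (z₁ z₂ : EuclideanSpace ℝ (Fin 3)) (r₁ r₂ : ℝ)
    (hball₁ : Metric.closedBall z₁ r₁ ⊆ T₁)
    (hmax₁ : ∀ (z' : EuclideanSpace ℝ (Fin 3)) (r' : ℝ),
      Metric.closedBall z' r' ⊆ T₁ → r' ≤ r₁)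
    (hball₂ : Metric.closedBall z₂ r₂ ⊆ T₂)
    (hmax₂ : ∀ (z' : EuclideanSpace ℝ (Fin 3)) (r' : ℝ),
      Metric.closedBall z' r' ⊆ T₂ → r' ≤ r₂)
    (z₁₀ z₂₀ : EuclideanSpace ℝ (Fin 3))
    (hz₁₀mem : z₁₀ ∈ affineSpan ℝ ({x₁, x₃, x₄} : Set (EuclideanSpace ℝ (Fin 3))))
    (hz₁₀perp : ∀ p ∈ affineSpan ℝ ({x₁, x₃, x₄} : Set (EuclideanSpace ℝ (Fin 3))),
      ⟪z₁ - z₁₀, p - z₁₀⟫ = 0)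
    (hz₂₀mem : z₂₀ ∈ affineSpan ℝ ({x₁, x₃, x₄} : Set (EuclideanSpace ℝ (Fin 3))))
    (hz₂₀perp : ∀ p ∈ affineSpan ℝ ({x₁, x₃, x₄} : Set (EuclideanSpace ℝ (Fin 3))),
      ⟪z₂ - z₂₀, p - z₂₀⟫ = 0) :
    z₁₀ ∈ intrinsicInterior ℝ F₀ ∧ z₂₀ ∈ intrinsicInterior ℝ F₀ ∧
    ∃ m₀ : EuclideanSpace ℝ (Fin 3),
      segment ℝ z₁ z₂ ∩ F₀ = {m₀} ∧
      m₀ ∈ segment ℝ z₁₀ z₂₀ ∧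
      min (Metric.infDist z₁₀ (intrinsicFrontier ℝ F₀))
          (Metric.infDist z₂₀ (intrinsicFrontier ℝ F₀)) ≤
        Metric.infDist m₀ (intrinsicFrontier ℝ F₀) := by
  let s₁ : Affine.Simplex ℝ (EuclideanSpace ℝ (Fin 3)) 3 := ⟨![x₁, x₂, x₃, x₄], h₁⟩
  let s₂ : Affine.Simplex ℝ (EuclideanSpace ℝ (Fin 3)) 3 := ⟨![x₁, x₃, x₄, x₅], h₂⟩
  have hT₁' : T₁ = s₁.closedInterior := by
    rw [hT₁, ← s₁.convexHull_eq_closedInterior]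
    congr 1; ext p; simp [s₁, eq_comm]; tauto
  have hT₂' : T₂ = s₂.closedInterior := by
    rw [hT₂, ← s₂.convexHull_eq_closedInterior]
    congr 1; ext p; simp [s₂, eq_comm]; tauto
  have hface₁ : Set.range (s₁.faceOpposite 1).points = {x₁, x₃, x₄} := by
    ext p; simp [s₁, Fin.exists_fin_succ, eq_comm]
  have hface₂ : Set.range (s₂.faceOpposite 3).points = {x₁, x₃, x₄} := by
    ext p; simp [s₂, Fin.exists_fin_succ, eq_comm]
  obtain ⟨hside₁, hint₁⟩ :=
    Affine.Simplex.sSameSide_and_mem_intrinsicInterior_of_closedBall_subset_closedInterior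
      (s₁.span_eq_top finrank_euclideanSpace_fin) (hT₁' ▸ hball₁) (hT₁' ▸ hmax₁) hface₁
      hz₁₀mem hz₁₀perp
  obtain ⟨hside₂, hint₂⟩ :=
    Affine.Simplex.sSameSide_and_mem_intrinsicInterior_of_closedBall_subset_closedInterior
      (s₂.span_eq_top finrank_euclideanSpace_fin) (hT₂' ▸ hball₂) (hT₂' ▸ hmax₂) hface₂
      hz₂₀mem hz₂₀perp
  rw [← hF₀] at hint₁ hint₂
  have hF₀conv : Convex ℝ F₀ := hF₀ ▸ convex_convexHull ℝ _
  have hfoot₁ :=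
    EuclideanGeometry.coe_orthogonalProjection_eq_of_forall_inner_eq_zero hz₁₀mem hz₁₀perp
  have hfoot₂ :=
    EuclideanGeometry.coe_orthogonalProjection_eq_of_forall_inner_eq_zero hz₂₀mem hz₂₀perp
  obtain ⟨m₀, hm₀, hm₀feet⟩ :=
    (hside₁.trans_sOppSide (hopp.trans_sSameSide hside₂.symm)).exists_segment_inter_eq_singleton
      hF₀conv (hF₀ ▸ convexHull_subset_affineSpan _) (hfoot₁ ▸ intrinsicInterior_subset hint₁)
      (hfoot₂ ▸ intrinsicInterior_subset hint₂)
  rw [hfoot₁, hfoot₂] at hm₀feet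
  exact ⟨hint₁, hint₂, m₀, hm₀, hm₀feet, hF₀conv.min_infDist_intrinsicFrontier_le
    (intrinsicInterior_subset hint₁) (intrinsicInterior_subset hint₂) hm₀feet⟩
end

section
/- Let c₀ ≥ 1 and let T be a nondegenerate tetrahedron in ℝ³ with diameter h_T, insphere diameter ρ_T, and incenter z_T, satisfying h_T/ρ_T ≤ c₀. Let F be a face of T, let m be a point in the relative interior of F with dist(m, ∂F) ≥ c₂·h_T for some constant c₂ > 0, and let e = [x₁, x₂] be an edge of F. Then the tetrahedron K = conv{x₁, x₂, m, z_T} satisfies |K| ≥ (c₂ / (12 c₀³)) · h_T³. -/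
/-!
Put `a = v k - v j` and `b = m - v j`.  The volume of `K` is `|⟪a × b, z - v j⟫| / 6`, and
`a × b` is normal to the face `F`.  Since `T` lies on one side of the plane of `F` and contains
the insphere, `|⟪a × b, z - v j⟫| ≥ r ‖a × b‖`.  Next, `‖a × b‖ = ‖a‖ · dist(m, line e)`, and the
foot of the perpendicular from `m` is not in the relative interior of `F`, so the segment to it
crosses `∂F` and `dist(m, line e) ≥ c₂ h_T`.  Finally every edge of `T` has length at least
`2r`: in a direction orthogonal to the opposite edge and to the segment from one of its ends to
the midpoint of `e`, the width of `T` is at most `‖a‖`.  Combined with `h_T ≤ 2 r c₀` this gives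
`|K| ≥ r · 2r · c₂ h_T / 6 ≥ c₂ h_T³ / (12 c₀²)`.
-/

open MeasureTheory Set Module Metric Matrix WithLp
open scoped Pointwise RealInnerProductSpace

local notation "ℝ³" => EuclideanSpace ℝ (Fin 3)

section Simplex

variable {ι : Type*} [Fintype ι]

def signFlip [DecidableEq ι] (s : Finset ι) : (ι → ℝ) →ₗ[ℝ] ι → ℝ :=
  Matrix.toLin' (Matrix.diagonal fun i => if i ∈ s then -1 else 1)

lemma abs_det_signFlip [DecidableEq ι] (s : Finset ι) : |LinearMap.det (signFlip s)| = 1 := by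
  rw [signFlip, LinearMap.det_toLin', Matrix.det_diagonal, Finset.abs_prod]
  exact Finset.prod_eq_one fun i _ => by split_ifs <;> simp

lemma volume_sum_abs_lt_one :
    volume {x : ι → ℝ | ∑ i, |x i| < 1} =
      .ofReal (2 ^ Fintype.card ι / (Fintype.card ι).factorial) := by
  have := volume_sum_rpow_lt_one ι (p := 1) le_rfl
  simp only [Real.rpow_one, div_one] at this
  rw [this, one_add_one_eq_two, Real.Gamma_two, mul_one, Real.Gamma_nat_eq_factorial]

/-- The `2 ^ n` sign flips of this corner cover the `ℓ¹` unit ball, of volume `2 ^ n / n!`. -/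
lemma ofReal_inv_factorial_le_volume_sum_le_one :
    .ofReal ((Fintype.card ι).factorial : ℝ)⁻¹ ≤
      volume {x : ι → ℝ | (∀ i, 0 ≤ x i) ∧ ∑ i, x i ≤ 1} := by
  classical
  set C := {x : ι → ℝ | (∀ i, 0 ≤ x i) ∧ ∑ i, x i ≤ 1}
  have hcover : {x : ι → ℝ | ∑ i, |x i| < 1} ⊆ ⋃ s : Finset ι, signFlip s '' C := by
    intro x hx
    refine mem_iUnion.2
      ⟨({i | x i < 0} : Finset ι), fun i => |x i|, ⟨fun i => abs_nonneg _, hx.le⟩, ?_⟩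
    ext i
    simp only [signFlip, Matrix.toLin'_apply, Matrix.mulVec_diagonal, Finset.mem_filter,
      Finset.mem_univ, true_and]
    split_ifs with h
    · rw [abs_of_neg h, neg_one_mul, neg_neg]
    · rw [abs_of_nonneg (not_lt.1 h), one_mul]
  have key : ENNReal.ofReal (2 ^ Fintype.card ι / (Fintype.card ι).factorial) ≤
      2 ^ Fintype.card ι * volume C := by
    rw [← volume_sum_abs_lt_one]
    calc volume {x : ι → ℝ | ∑ i, |x i| < 1}
        ≤ volume (⋃ s : Finset ι, signFlip s '' C) := measure_mono hcover
      _ ≤ ∑ s : Finset ι, volume (signFlip s '' C) := measure_iUnion_fintype_le _ _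
      _ = 2 ^ Fintype.card ι * volume C := by
        simp [Measure.addHaar_image_linearMap, abs_det_signFlip, Fintype.card_finset]
  rw [div_eq_mul_inv, ENNReal.ofReal_mul (by positivity), ENNReal.ofReal_pow zero_le_two,
    ENNReal.ofReal_ofNat] at key
  exact (ENNReal.mul_le_mul_iff_right (by simp) (by simp)).1 key

lemma ofReal_abs_det_div_factorial_le_volume_convexHull [DecidableEq ι]
    (p : EuclideanSpace ℝ ι) (d : ι → EuclideanSpace ℝ ι) :
    ENNReal.ofReal (|(EuclideanSpace.basisFun ι ℝ).toBasis.det d| / (Fintype.card ι).factorial)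
      ≤ volume (convexHull ℝ (insert p (range fun i => p + d i))) := by
  set b := (EuclideanSpace.basisFun ι ℝ).toBasis
  set L := b.constr ℕ d
  set C := {x : EuclideanSpace ℝ ι | (∀ i, 0 ≤ x i) ∧ ∑ i, x i ≤ 1}
  have hC : ENNReal.ofReal ((Fintype.card ι).factorial : ℝ)⁻¹ ≤ volume C :=
    ofReal_inv_factorial_le_volume_sum_le_one.trans_eq
      ((EuclideanSpace.volume_preserving_symm_measurableEquiv_toLp ι).measure_preimage_equiv _).symm
  have hdet : LinearMap.det L = b.det d := by
    rw [← LinearMap.det_toMatrix b, ← Basis.toMatrix_eq_toMatrix_constr, Basis.det_apply]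
  have hsub : p +ᵥ L '' C ⊆ convexHull ℝ (insert p (range fun i => p + d i)) := by
    rintro _ ⟨_, ⟨x, ⟨hx0, hx1⟩, rfl⟩, rfl⟩
    have hmem := (convex_convexHull ℝ (insert p (range fun i => p + d i))).sum_mem
      (t := Finset.univ) (w := fun o : Option ι => o.elim (1 - ∑ i, x i) x)
      (z := fun o => o.elim p fun i => p + d i) (fun o _ => ?_) (by simp [Fintype.sum_option])
      (fun o _ => ?_)
    · convert hmem using 1
      simp only [Fintype.sum_option, Option.elim, vadd_eq_add, L, Basis.constr_apply_fintype, b,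
        smul_add, Finset.sum_add_distrib, ← Finset.sum_smul, sub_smul, one_smul]
      abel
    · cases o
      exacts [sub_nonneg.2 hx1, hx0 _]
    · cases o
      exacts [subset_convexHull ℝ _ (mem_insert _ _),
        subset_convexHull ℝ _ (mem_insert_of_mem _ (mem_range_self _))]
  calc ENNReal.ofReal (|b.det d| / (Fintype.card ι).factorial)
      = ENNReal.ofReal |LinearMap.det L| * ENNReal.ofReal ((Fintype.card ι).factorial : ℝ)⁻¹ := by
        rw [hdet, div_eq_mul_inv, ENNReal.ofReal_mul (abs_nonneg _)]
    _ ≤ ENNReal.ofReal |LinearMap.det L| * volume C := by gcongr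
    _ = volume (p +ᵥ L '' C) := by rw [measure_vadd, Measure.addHaar_image_linearMap]
    _ ≤ _ := measure_mono hsub

end Simplex

theorem IsPreconnected.inter_frontier_nonempty {X : Type*} [TopologicalSpace X] {s t : Set X}
    (hs : IsPreconnected s) (hst : (s ∩ t).Nonempty) (hst' : (s \ t).Nonempty) :
    (s ∩ frontier t).Nonempty := by
  by_contra h
  have hcover : s ⊆ interior t ∪ (closure t)ᶜ := fun x hx => by
    by_contra hx'
    simp only [mem_union, mem_compl_iff, not_or, not_not] at hx'
    exact h ⟨x, hx, hx'.2, hx'.1⟩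
  have hdisj : Disjoint (interior t) (closure t)ᶜ :=
    disjoint_compl_right.mono_left (interior_subset.trans subset_closure)
  rcases hs.subset_or_subset isOpen_interior isClosed_closure.isOpen_compl hdisj hcover
    with hsub | hsub
  · obtain ⟨x, hxs, hxt⟩ := hst'
    exact hxt (interior_subset (hsub hxs))
  · obtain ⟨x, hxs, hxt⟩ := hst
    exact hsub hxs (subset_closure hxt)

lemma infDist_intrinsicFrontier_le_dist {E : Type*} [NormedAddCommGroup E] [NormedSpace ℝ E]
    {F : Set E} {m p : E} (hm : m ∈ intrinsicInterior ℝ F) (hp : p ∈ affineSpan ℝ F)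
    (hp' : p ∉ intrinsicInterior ℝ F) :
    infDist m (intrinsicFrontier ℝ F) ≤ dist m p := by
  obtain ⟨m', hm', rfl⟩ := hm
  let γ : ℝ → affineSpan ℝ F := fun t =>
    ⟨AffineMap.lineMap (m' : E) p t, AffineMap.lineMap_mem t m'.2 hp⟩
  have hγ : Continuous γ := AffineMap.lineMap_continuous.subtype_mk _
  obtain ⟨_, ⟨t, ht, rfl⟩, hfr⟩ :=
    (isPreconnected_Icc.image γ hγ.continuousOn).inter_frontier_nonempty
      (t := interior ((↑) ⁻¹' F))
      ⟨γ 0, mem_image_of_mem γ (left_mem_Icc.2 zero_le_one), by simpa [γ]⟩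
      ⟨γ 1, mem_image_of_mem γ (right_mem_Icc.2 zero_le_one), fun h => hp' ⟨γ 1, h, by simp [γ]⟩⟩
  calc infDist (m' : E) (intrinsicFrontier ℝ F) ≤ dist (m' : E) (γ t) :=
        infDist_le_dist_of_mem ⟨γ t, frontier_interior_subset hfr, rfl⟩
    _ = t * dist (m' : E) p := by
        rw [dist_comm, dist_lineMap_left, Real.norm_of_nonneg ht.1]
    _ ≤ dist (m' : E) p := mul_le_of_le_one_left dist_nonneg ht.2

lemma pos_of_interior_nonempty_of_forall_closedBall_subset_le {X : Type*} [PseudoMetricSpace X]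
    {T : Set X} {r : ℝ} (hT : (interior T).Nonempty)
    (hmax : ∀ z' r', closedBall z' r' ⊆ T → r' ≤ r) : 0 < r := by
  obtain ⟨x, hx⟩ := hT
  obtain ⟨ε, hε, hsub⟩ := nhds_basis_closedBall.mem_iff.1 (mem_interior_iff_mem_nhds.1 hx)
  exact hε.trans_le (hmax x ε hsub)

lemma AffineIndependent.linearIndependent_sub_pair {k V ι : Type*} [Ring k] [AddCommGroup V]
    [Module k V] {v : ι → V} (hv : AffineIndependent k v) {i j l : ι} (hij : i ≠ j) (hil : i ≠ l)
    (hjl : j ≠ l) : LinearIndependent k ![v j - v i, v l - v i] := by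
  classical
  rw [LinearIndependent.pair_iff]
  intro s t hst
  have := hv.eq_zero_of_sum_eq_zero (s := {i, j, l})
    (w := fun x => if x = j then s else if x = l then t else -(s + t))
    (by simp [hij, hil, hjl, hjl.symm])
    (by
      simp only [Finset.sum_insert, Finset.mem_insert, Finset.mem_singleton, hij, hil, hjl,
        hjl.symm, not_false_eq_true, or_self, Finset.sum_singleton, if_true, if_false,
        ← hst, smul_sub, add_smul, neg_smul]
      abel)
  exact ⟨by simpa [hjl] using this j (by simp), by simpa [hjl.symm] using this l (by simp)⟩

section InnerProduct

variable {E : Type*} [NormedAddCommGroup E] [InnerProductSpace ℝ E]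

lemma notMem_intrinsicInterior_of_forall_inner_le {F : Set E} {n p q : E}
    (hmin : ∀ x ∈ F, ⟪n, p⟫ ≤ ⟪n, x⟫) (hq : q ∈ F) (hlt : ⟪n, p⟫ < ⟪n, q⟫) :
    p ∉ intrinsicInterior ℝ F := by
  rintro ⟨p', hp', rfl⟩
  let γ : ℝ → affineSpan ℝ F := fun t =>
    ⟨AffineMap.lineMap (p' : E) q t, AffineMap.lineMap_mem t p'.2 (subset_affineSpan ℝ F hq)⟩
  have hγ : Continuous γ := AffineMap.lineMap_continuous.subtype_mk _
  have hnhds : ∀ᶠ t in nhds (0 : ℝ), γ t ∈ interior ((↑) ⁻¹' F) :=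
    hγ.continuousAt.preimage_mem_nhds (isOpen_interior.mem_nhds (by simpa [γ]))
  obtain ⟨t, ht, ht0⟩ := (hnhds.filter_mono nhdsWithin_le_nhds).and self_mem_nhdsWithin
    |>.exists (f := nhdsWithin 0 (Iio 0))
  have := hmin _ (interior_subset (s := ((↑) : affineSpan ℝ F → E) ⁻¹' F) ht)
  simp only [γ, AffineMap.lineMap_apply_module', inner_add_right, inner_sub_right,
    real_inner_smul_right] at this
  nlinarith [ht0]

lemma inner_add_mul_norm_le_of_closedBall_subset_convexHull {S : Set E} {z n : E} {r c : ℝ}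
    (hball : closedBall z r ⊆ convexHull ℝ S) (hr : 0 ≤ r) (hS : ∀ x ∈ S, ⟪n, x⟫ ≤ c) :
    ⟪n, z⟫ + r * ‖n‖ ≤ c := by
  have hhull : convexHull ℝ S ⊆ {x | ⟪n, x⟫ ≤ c} :=
    convexHull_min hS (convex_halfSpace_le (innerₛₗ ℝ n).isLinear c)
  rcases eq_or_ne n 0 with rfl | hn
  · simpa using hhull (hball (mem_closedBall_self hr))
  have hmem : z + (r / ‖n‖) • n ∈ closedBall z r := by
    rw [mem_closedBall, dist_eq_norm, add_sub_cancel_left, norm_smul,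
      Real.norm_of_nonneg (by positivity), div_mul_cancel₀ _ (norm_ne_zero_iff.2 hn)]
  have := hhull (hball hmem)
  rw [mem_ofPred_eq, inner_add_right, real_inner_smul_right, real_inner_self_eq_norm_sq] at this
  convert this using 2
  field_simp

lemma mul_norm_le_abs_inner_sub_of_closedBall_subset_convexHull {ι : Type*} {v : ι → E}
    {z n : E} {r : ℝ} {i j : ι} (hball : closedBall z r ⊆ convexHull ℝ (range v)) (hr : 0 ≤ r)
    (hn : ∀ x ≠ i, ⟪n, v x - v j⟫ = 0) : r * ‖n‖ ≤ |⟪n, z - v j⟫| := by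
  have hvert (x : ι) : ⟪n, v x⟫ = ⟪n, v j⟫ ∨ x = i := by
    by_cases hx : x = i
    exacts [.inr hx, .inl (by rw [← sub_eq_zero, ← inner_sub_right, hn x hx])]
  rw [inner_sub_right]
  rcases le_total ⟪n, v i⟫ ⟪n, v j⟫ with hi | hi
  · have := inner_add_mul_norm_le_of_closedBall_subset_convexHull hball hr (c := ⟪n, v j⟫) <| by
      rintro _ ⟨x, rfl⟩
      rcases hvert x with hx | rfl <;> linarith
    exact le_abs.2 (.inr (by linarith))
  · have := inner_add_mul_norm_le_of_closedBall_subset_convexHull hball hr (n := -n)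
      (c := -⟪n, v j⟫) <| by
      rintro _ ⟨x, rfl⟩
      rw [inner_neg_left, neg_le_neg_iff]
      rcases hvert x with hx | rfl <;> linarith
    rw [inner_neg_left, norm_neg] at this
    exact le_abs.2 (.inl (by linarith))

lemma AffineIndependent.pos_of_forall_closedBall_subset_le [FiniteDimensional ℝ E] {ι : Type*}
    [Fintype ι] {v : ι → E} (hv : AffineIndependent ℝ v) (hcard : Fintype.card ι = finrank ℝ E + 1)
    {r : ℝ} (hmax : ∀ z' r', closedBall z' r' ⊆ convexHull ℝ (range v) → r' ≤ r) : 0 < r := by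
  refine pos_of_interior_nonempty_of_forall_closedBall_subset_le ?_ hmax
  rwa [(convex_convexHull ℝ _).interior_nonempty_iff_affineSpan_eq_top, affineSpan_convexHull,
    hv.affineSpan_eq_top_iff_card_eq_finrank_add_one]

lemma exists_ne_zero_inner_eq_zero_of_two_lt_finrank [FiniteDimensional ℝ E]
    (hE : 2 < finrank ℝ E) (x y : E) : ∃ u ≠ 0, ⟪u, x⟫ = 0 ∧ ⟪u, y⟫ = 0 := by
  set K := Submodule.span ℝ (range ![x, y])
  have hK : finrank ℝ K ≤ 2 := (finrank_range_le_card _).trans (by simp)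
  have hKperp : Kᗮ ≠ ⊥ := by
    intro h
    have := K.finrank_add_finrank_orthogonal
    rw [h, finrank_bot] at this
    omega
  obtain ⟨u, hu, hu0⟩ := (Submodule.ne_bot_iff _).1 hKperp
  exact ⟨u, hu0,
    Submodule.inner_left_of_mem_orthogonal (Submodule.subset_span (mem_range_self 0)) hu,
    Submodule.inner_left_of_mem_orthogonal (Submodule.subset_span (mem_range_self 1)) hu⟩

lemma two_mul_le_dist_of_closedBall_subset_convexHull [FiniteDimensional ℝ E]
    (hE : 2 < finrank ℝ E) {p₁ p₂ p₃ p₄ z : E} {r : ℝ}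
    (hball : closedBall z r ⊆ convexHull ℝ {p₁, p₂, p₃, p₄}) (hr : 0 ≤ r) :
    2 * r ≤ dist p₁ p₂ := by
  -- along `u`, `p₃` and `p₄` project to the midpoint of the projections of `p₁` and `p₂`
  obtain ⟨u, hu, h₃₄, h₁₂⟩ :=
    exists_ne_zero_inner_eq_zero_of_two_lt_finrank hE (p₃ - p₄) (p₁ - p₄ + (p₂ - p₄))
  simp only [inner_sub_right, inner_add_right] at h₃₄ h₁₂
  have hmax₁ := le_max_left ⟪u, p₁⟫ ⟪u, p₂⟫
  have hmax₂ := le_max_right ⟪u, p₁⟫ ⟪u, p₂⟫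
  have hmin₁ := min_le_left ⟪u, p₁⟫ ⟪u, p₂⟫
  have hmin₂ := min_le_right ⟪u, p₁⟫ ⟪u, p₂⟫
  have hup := inner_add_mul_norm_le_of_closedBall_subset_convexHull hball hr
    (c := max ⟪u, p₁⟫ ⟪u, p₂⟫) <| by
      simp only [mem_insert_iff, mem_singleton_iff, forall_eq_or_imp, forall_eq]
      refine ⟨?_, ?_, ?_, ?_⟩ <;> linarith
  have hdown := inner_add_mul_norm_le_of_closedBall_subset_convexHull hball hr (n := -u)
    (c := -min ⟪u, p₁⟫ ⟪u, p₂⟫) <| by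
      simp only [mem_insert_iff, mem_singleton_iff, forall_eq_or_imp, forall_eq, inner_neg_left]
      refine ⟨?_, ?_, ?_, ?_⟩ <;> linarith
  rw [inner_neg_left, norm_neg] at hdown
  have hwidth : max ⟪u, p₁⟫ ⟪u, p₂⟫ - min ⟪u, p₁⟫ ⟪u, p₂⟫ ≤ ‖u‖ * dist p₁ p₂ := by
    rw [max_sub_min_eq_abs', ← inner_sub_right, dist_eq_norm]
    exact abs_real_inner_le_norm u _
  have hu' : 0 < ‖u‖ := norm_pos_iff.2 hu
  nlinarith

end InnerProduct

def euclideanCross (x y : ℝ³) : ℝ³ := toLp 2 (ofLp x ⨯₃ ofLp y)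

local infixl:74 " ×₃ " => euclideanCross

lemma real_inner_eq_ofLp_dotProduct (x y : ℝ³) : ⟪x, y⟫ = ofLp x ⬝ᵥ ofLp y := by
  rw [EuclideanSpace.inner_eq_star_dotProduct, star_trivial, dotProduct_comm]

lemma inner_euclideanCross_cyclic (x y w : ℝ³) : ⟪x ×₃ y, w⟫ = ⟪y ×₃ w, x⟫ := by
  simp only [real_inner_eq_ofLp_dotProduct, euclideanCross, dotProduct_comm _ (ofLp w),
    dotProduct_comm _ (ofLp x)]
  exact triple_product_permutation _ _ _

lemma inner_euclideanCross_swap (x y w : ℝ³) : ⟪x ×₃ y, w⟫ = -⟪x ×₃ w, y⟫ := by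
  rw [inner_euclideanCross_cyclic, inner_euclideanCross_cyclic x w, euclideanCross,
    euclideanCross, ← cross_anticomm, toLp_neg, inner_neg_left]

lemma inner_euclideanCross_self_left (x y : ℝ³) : ⟪x ×₃ y, x⟫ = 0 := by
  simp [real_inner_eq_ofLp_dotProduct, euclideanCross, dotProduct_comm _ (ofLp x)]

lemma inner_euclideanCross_self_right (x y : ℝ³) : ⟪x ×₃ y, y⟫ = 0 := by
  simp [real_inner_eq_ofLp_dotProduct, euclideanCross, dotProduct_comm _ (ofLp y)]

lemma norm_euclideanCross_sq (x y : ℝ³) :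
    ‖x ×₃ y‖ ^ 2 = ‖x‖ ^ 2 * ‖y‖ ^ 2 - ⟪x, y⟫ ^ 2 := by
  simp only [← real_inner_self_eq_norm_sq, real_inner_eq_ofLp_dotProduct, euclideanCross,
    cross_dot_cross, dotProduct_comm (ofLp y) (ofLp x)]
  ring

lemma euclideanCross_sub_smul_self (x y : ℝ³) (t : ℝ) : x ×₃ (y - t • x) = x ×₃ y := by
  simp [euclideanCross, cross_self]

lemma exists_norm_euclideanCross_eq (x y : ℝ³) : ∃ t : ℝ, ‖x ×₃ y‖ = ‖x‖ * ‖y - t • x‖ := by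
  refine ⟨⟪x, y⟫ / ‖x‖ ^ 2, ?_⟩
  have horth : ⟪x, y - (⟪x, y⟫ / ‖x‖ ^ 2) • x⟫ = 0 := by
    rcases eq_or_ne x 0 with rfl | hx
    · simp
    rw [inner_sub_right, real_inner_smul_right, real_inner_self_eq_norm_sq]
    field_simp
    ring
  rw [← euclideanCross_sub_smul_self x y, ← sq_eq_sq₀ (norm_nonneg _) (by positivity),
    norm_euclideanCross_sq, horth]
  ring

lemma euclideanCross_ne_zero {x y : ℝ³} (h : LinearIndependent ℝ ![x, y]) : x ×₃ y ≠ 0 := by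
  have : LinearIndependent ℝ ![ofLp x, ofLp y] := by
    rw [LinearIndependent.pair_iff] at h ⊢
    exact fun s t hst => h s t (by simpa using congrArg (toLp 2) hst)
  simpa [euclideanCross] using crossProduct_ne_zero_iff_linearIndependent.2 this

lemma det_basisFun_eq_inner_euclideanCross (x y w : ℝ³) :
    (EuclideanSpace.basisFun (Fin 3) ℝ).toBasis.det ![x, y, w] = ⟪x ×₃ y, w⟫ := by
  rw [Basis.det_apply, ← Matrix.det_transpose, inner_euclideanCross_cyclic,
    real_inner_eq_ofLp_dotProduct, dotProduct_comm, euclideanCross, ofLp_toLp,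
    triple_product_eq_det]
  congr 1
  ext i j
  fin_cases i <;> simp [Basis.toMatrix_apply]

lemma abs_inner_euclideanCross_div_six_le_volume_convexHull (p₀ p₁ p₂ p₃ : ℝ³) :
    |⟪(p₁ - p₀) ×₃ (p₂ - p₀), p₃ - p₀⟫| / 6 ≤
      (volume (convexHull ℝ {p₀, p₁, p₂, p₃})).toReal := by
  have h := ofReal_abs_det_div_factorial_le_volume_convexHull p₀ ![p₁ - p₀, p₂ - p₀, p₃ - p₀]
  have hvert : insert p₀ (range fun i => p₀ + ![p₁ - p₀, p₂ - p₀, p₃ - p₀] i) =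
      {p₀, p₁, p₂, p₃} := by
    ext x
    simp [Fin.exists_fin_succ, eq_comm]
  rw [hvert, det_basisFun_eq_inner_euclideanCross] at h
  have hfin : volume (convexHull ℝ {p₀, p₁, p₂, p₃}) ≠ ⊤ :=
    ((toFinite _).isCompact_convexHull ℝ).measure_lt_top.ne
  rw [← ENNReal.ofReal_le_iff_le_toReal hfin]
  simpa [Nat.factorial] using h

lemma inner_euclideanCross_sub_eq_zero_of_mem_convexHull {x y w p q : ℝ³}
    (hp : p ∈ convexHull ℝ {x, y, w}) (hq : q ∈ ({x, y, w} : Set ℝ³)) :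
    ⟪(y - x) ×₃ (p - x), q - x⟫ = 0 := by
  set N := (y - x) ×₃ (w - x)
  have hy : ⟪N, y - x⟫ = 0 := inner_euclideanCross_self_left _ _
  have hw : ⟪N, w - x⟫ = 0 := inner_euclideanCross_self_right _ _
  rw [inner_sub_right, sub_eq_zero] at hy hw
  have hplane : convexHull ℝ {x, y, w} ⊆ {q | ⟪N, q⟫ = ⟪N, x⟫} :=
    convexHull_min (by simp [insert_subset_iff, hy, hw])
      (convex_hyperplane (innerₛₗ ℝ N).isLinear _)
  rcases hq with rfl | rfl | rfl
  · simp
  · exact inner_euclideanCross_self_left _ _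
  · rw [inner_euclideanCross_swap, inner_sub_right, hplane hp, sub_self, neg_zero]

lemma lineMap_notMem_intrinsicInterior_convexHull {x y w : ℝ³}
    (h : LinearIndependent ℝ ![y - x, w - x]) (t : ℝ) :
    AffineMap.lineMap x y t ∉ intrinsicInterior ℝ (convexHull ℝ {x, y, w}) := by
  -- `N` is the normal to the line `xy` within the plane of the triangle, pointing towards `w`
  set N := ((y - x) ×₃ (w - x)) ×₃ (y - x)
  have hNy : ⟪N, y⟫ = ⟪N, x⟫ := by
    rw [← sub_eq_zero, ← inner_sub_right]
    exact inner_euclideanCross_self_right _ _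
  have hNw : ⟪N, w⟫ = ⟪N, x⟫ + ‖(y - x) ×₃ (w - x)‖ ^ 2 := by
    rw [← sub_eq_iff_eq_add', ← inner_sub_right, inner_euclideanCross_cyclic,
      real_inner_self_eq_norm_sq]
  have hpos : 0 < ‖(y - x) ×₃ (w - x)‖ ^ 2 := by
    have := euclideanCross_ne_zero h
    positivity
  have hNp : ⟪N, AffineMap.lineMap x y t⟫ = ⟪N, x⟫ := by
    rw [AffineMap.lineMap_apply_module', inner_add_right, real_inner_smul_right,
      inner_euclideanCross_self_right, mul_zero, zero_add]
  refine notMem_intrinsicInterior_of_forall_inner_le (n := N) (q := w) (fun q hq => ?_)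
    (subset_convexHull ℝ _ (by simp)) (by rw [hNp, hNw]; linarith)
  refine convexHull_min ?_ (convex_halfSpace_ge (innerₛₗ ℝ N).isLinear _) hq
  simp [insert_subset_iff, hNp, hNy, hNw, hpos.le]

lemma norm_sub_mul_infDist_le_norm_euclideanCross {x y w m : ℝ³}
    (h : LinearIndependent ℝ ![y - x, w - x])
    (hm : m ∈ intrinsicInterior ℝ (convexHull ℝ {x, y, w})) :
    ‖y - x‖ * infDist m (intrinsicFrontier ℝ (convexHull ℝ {x, y, w})) ≤
      ‖(y - x) ×₃ (m - x)‖ := by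
  obtain ⟨t, ht⟩ := exists_norm_euclideanCross_eq (y - x) (m - x)
  have hfoot : AffineMap.lineMap x y t ∈ affineSpan ℝ (convexHull ℝ {x, y, w}) :=
    AffineMap.lineMap_mem t (subset_affineSpan ℝ _ (subset_convexHull ℝ _ (by simp)))
      (subset_affineSpan ℝ _ (subset_convexHull ℝ _ (by simp)))
  have hdist : dist m (AffineMap.lineMap x y t) = ‖m - x - t • (y - x)‖ := by
    rw [dist_eq_norm, AffineMap.lineMap_apply_module', sub_add_eq_sub_sub, sub_right_comm]
  rw [ht, ← hdist]
  gcongr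
  exact infDist_intrinsicFrontier_le_dist hm hfoot
    (lineMap_notMem_intrinsicInterior_convexHull h t)

lemma exists_range_eq_and_image_compl_eq {α : Type*} (v : Fin 4 → α) {i j k : Fin 4}
    (hji : j ≠ i) (hki : k ≠ i) (hjk : j ≠ k) :
    ∃ l, l ≠ j ∧ l ≠ k ∧ range v = {v j, v k, v i, v l} ∧ v '' {i}ᶜ = {v j, v k, v l} := by
  obtain ⟨l, hli, hlj, hlk, huniv⟩ :
      ∃ l, l ≠ i ∧ l ≠ j ∧ l ≠ k ∧ ∀ x, x = i ∨ x = j ∨ x = k ∨ x = l := by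
    revert i j k
    decide
  refine ⟨l, hlj, hlk, ?_, ?_⟩
  · ext x
    constructor
    · rintro ⟨y, rfl⟩
      rcases huniv y with rfl | rfl | rfl | rfl <;> simp
    · rintro (rfl | rfl | rfl | rfl) <;> exact mem_range_self _
  · ext x
    constructor
    · rintro ⟨y, hy, rfl⟩
      rcases huniv y with rfl | rfl | rfl | rfl <;> simp_all
    · rintro (rfl | rfl | rfl)
      exacts [mem_image_of_mem v hji, mem_image_of_mem v hki, mem_image_of_mem v hli]

lemma div_mul_pow_three_le {c₀ c₂ h r : ℝ} (hc₀ : 1 ≤ c₀) (hc₂ : 0 ≤ c₂) (hh : 0 ≤ h)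
    (hhr : h ≤ 2 * r * c₀) :
    c₂ / (12 * c₀ ^ 3) * h ^ 3 ≤ r * (2 * r * (c₂ * h)) / 6 := by
  have hsq : h ^ 2 ≤ 4 * r ^ 2 * c₀ ^ 3 := by
    calc h ^ 2 ≤ (2 * r * c₀) ^ 2 * 1 := by rw [mul_one]; gcongr
      _ ≤ (2 * r * c₀) ^ 2 * c₀ := by gcongr
      _ = 4 * r ^ 2 * c₀ ^ 3 := by ring
  rw [div_mul_eq_mul_div, div_le_div_iff₀ (by positivity) (by norm_num)]
  nlinarith [mul_le_mul_of_nonneg_left hsq (mul_nonneg hc₂ hh)]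

/-- Let `c₀ ≥ 1` and let `T` be a nondegenerate tetrahedron in `ℝ³` with
diameter `h_T`, insphere diameter `ρ_T = 2 * r`, and incenter `z` (center of the largest
closed ball contained in `T`), satisfying `h_T/ρ_T ≤ c₀`.  Let `F` be the face of `T` opposite
the vertex `v i`, let `m` be a point in the relative interior of `F` with
`dist(m, ∂F) ≥ c₂·h_T` for some constant `c₂ > 0`, and let `e = [v j, v k]` (`j, k ≠ i`,
`j ≠ k`) be an edge of `F`.  Then the tetrahedron `K = conv {v j, v k, m, z}` satisfies
`|K| ≥ (c₂ / (12 c₀³)) · h_T³`. -/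
theorem volume_subtetrahedron_ge
    (c₀ : ℝ) (hc₀ : 1 ≤ c₀)
    (v : Fin 4 → EuclideanSpace ℝ (Fin 3))
    (hv : AffineIndependent ℝ v)
    (T : Set (EuclideanSpace ℝ (Fin 3)))
    (hT : T = convexHull ℝ (Set.range v))
    (z : EuclideanSpace ℝ (Fin 3)) (r : ℝ)
    (hball : Metric.closedBall z r ⊆ T)
    (hmax : ∀ (z' : EuclideanSpace ℝ (Fin 3)) (r' : ℝ),
      Metric.closedBall z' r' ⊆ T → r' ≤ r)
    (hreg : Metric.diam T / (2 * r) ≤ c₀)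
    (i j k : Fin 4) (hji : j ≠ i) (hki : k ≠ i) (hjk : j ≠ k)
    (F : Set (EuclideanSpace ℝ (Fin 3)))
    (hF : F = convexHull ℝ (v '' ({i}ᶜ : Set (Fin 4))))
    (c₂ : ℝ) (hc₂ : 0 < c₂)
    (m : EuclideanSpace ℝ (Fin 3))
    (hmF : m ∈ intrinsicInterior ℝ F)
    (hmdist : c₂ * Metric.diam T ≤ Metric.infDist m (intrinsicFrontier ℝ F))
    (K : Set (EuclideanSpace ℝ (Fin 3)))
    (hK : K = convexHull ℝ {v j, v k, m, z}) :
    c₂ / (12 * c₀ ^ 3) * Metric.diam T ^ 3 ≤ (volume K).toReal := by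
  subst hT hF hK
  obtain ⟨l, hlj, hlk, hrange, hface⟩ := exists_range_eq_and_image_compl_eq v hji hki hjk
  rw [hface] at hmF hmdist
  have hr : 0 < r := hv.pos_of_forall_closedBall_subset_le (by simp) hmax
  have hdiam : diam (convexHull ℝ (range v)) ≤ 2 * r * c₀ := by
    rwa [div_le_iff₀ (by positivity), mul_comm] at hreg
  have hedge : 2 * r ≤ ‖v k - v j‖ := by
    rw [← dist_eq_norm, dist_comm]
    exact two_mul_le_dist_of_closedBall_subset_convexHull (by simp) (hrange ▸ hball) hr.le
  have hheight := mul_norm_le_abs_inner_sub_of_closedBall_subset_convexHull hball hr.le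
    (n := (v k - v j) ×₃ (m - v j)) fun x hx =>
      inner_euclideanCross_sub_eq_zero_of_mem_convexHull (intrinsicInterior_subset hmF)
        (hface ▸ mem_image_of_mem v hx)
  have hbase := norm_sub_mul_infDist_le_norm_euclideanCross
    (hv.linearIndependent_sub_pair hjk hlj.symm hlk.symm) hmF
  calc _ ≤ r * (2 * r * (c₂ * diam (convexHull ℝ (range v)))) / 6 :=
        div_mul_pow_three_le hc₀ hc₂.le diam_nonneg hdiam
    _ ≤ r * (‖v k - v j‖ * (c₂ * diam (convexHull ℝ (range v)))) / 6 := by gcongr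
    _ ≤ r * ‖(v k - v j) ×₃ (m - v j)‖ / 6 := by gcongr; exact le_trans (by gcongr) hbase
    _ ≤ |⟪(v k - v j) ×₃ (m - v j), z - v j⟫| / 6 := by gcongr
    _ ≤ _ := abs_inner_euclideanCross_div_six_le_volume_convexHull (v j) (v k) m z
end
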